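/- arXiv:1011.2049 — 3 statements merged into one kernel-verified Lean document; each statement's English description precedes it below -/
import Mathlib

section
/- Let v_l and v_m be two adjacent vertices of a simple connected graph G, and let P_l and P_m be two pendant paths of G of lengths l and m with roots v_l and v_m, respectively, where l > m. Let x = (x_1,...,x_n)^t be a positive eigenvector of the distance matrix D(G) corresponding to the distance spectral radius Λ1(G). Then the sum of the entries of x over the vertices of P_l is strictly greater than the sum of the entries of x over the vertices of P_m, i.e., ∑_{j∈V(P_l)} x_j > ∑_{j∈V(P_m)} x_j. -/
/-!
Lay the two pendant paths end to end, `P_l` from its leaf to its root and then `P_m` from its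
root to its leaf. This is a geodesic `w 0, …, w (N - 1)`, `N = l + m + 2`, and a vertex `u` off
it lies at distance `d(p 0, u) + (l - r)` or `d(q 0, u) + (r - l - 1)` from `w r`. Subtracting
consecutive rows of `D x = Λ x` along the path gives, for `y = x ∘ w`,
`Λ (y (r+1) - y r) = 2 ∑_{t ≤ r} y t - ∑_t y t + c r`, where `c r = -X` before the roots and
`c r = X` after them, `X > 0` being the weight off the path. For the antisymmetric part
`ν r = y r - y (N - 1 - r)` this becomes `Λ (ν (r+1) - ν r) = 2 ∑_{t ≤ r} ν t + κ r` with
`κ r = 0` for `r < m` and `κ r < 0` from `m` up to the centre. If `ν 0 ≤ 0`, then `ν` and its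
partial sums stay nonpositive up to the centre, which antisymmetry rules out; so `ν 0 > 0`, and
then `ν` and its partial sums stay positive up to `m`, which is the claim.
-/

open Matrix

/-- The distance matrix of a graph: the `(i,j)` entry is the graph distance
between `i` and `j`, as a real number. -/
noncomputable def distMatrix {V : Type} [Fintype V] (G : SimpleGraph V) :
    Matrix V V ℝ := fun i j => (G.dist i j : ℝ)

/-- The distance spectral radius `Λ₁(G)`: the largest eigenvalue of the distance matrix. -/
noncomputable def distSpectralRadius {V : Type} [Fintype V] (G : SimpleGraph V) : ℝ :=
  sSup {μ : ℝ | ∃ x : V → ℝ, x ≠ 0 ∧ (distMatrix G).mulVec x = μ • x}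

/-- `p : Fin (s+1) → V` is a pendant path of length `s ≥ 1` in `G`: the vertices
`p 0, …, p s` are distinct, consecutive ones are adjacent, the root `p 0` has degree
greater than `2`, the endpoint `p s` has degree `1`, and all interior vertices have
degree `2`. -/
structure IsPendantPath {V : Type} [Fintype V] (G : SimpleGraph V) (s : ℕ)
    (p : Fin (s + 1) → V) : Prop where
  len_pos : 1 ≤ s
  inj : Function.Injective p
  adj : ∀ i : Fin s, G.Adj (p i.castSucc) (p i.succ)
  root_deg : 2 < (G.neighborSet (p 0)).ncard
  last_deg : (G.neighborSet (p (Fin.last s))).ncard = 1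
  mid_deg : ∀ i : Fin (s + 1), 0 < (i : ℕ) → (i : ℕ) < s → (G.neighborSet (p i)).ncard = 2

open Finset SimpleGraph

section Reflection

theorem apply_zero_le_of_two_mul_sum_le {a : ℕ → ℝ} {Λ : ℝ} {n : ℕ} (hΛ : 0 < Λ) (h0 : 0 ≤ a 0)
    (h : ∀ r < n, 2 * ∑ t ∈ range (r + 1), a t ≤ Λ * (a (r + 1) - a r)) :
    ∀ r ≤ n, a 0 ≤ a r := by
  suffices ∀ r ≤ n, ∀ t ≤ r, a 0 ≤ a t from fun r hr => this r hr r le_rfl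
  intro r
  induction r with
  | zero =>
    intro _ t ht
    rw [Nat.le_zero.mp ht]
  | succ r ih =>
    intro hr t ht
    have ih := ih (by omega)
    rcases Nat.lt_or_eq_of_le ht with ht | rfl
    · exact ih t (by omega)
    have hsum : 0 ≤ ∑ t ∈ range (r + 1), a t :=
      sum_nonneg fun t ht => h0.trans (ih t (Nat.lt_succ_iff.mp (mem_range.mp ht)))
    have hinc : 0 ≤ a (r + 1) - a r :=
      (mul_nonneg_iff_of_pos_left hΛ).mp ((mul_nonneg zero_le_two hsum).trans (h r hr))
    linarith [ih r le_rfl]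

def reflectSub (N : ℕ) (y : ℕ → ℝ) (r : ℕ) : ℝ := y r - y (N - 1 - r)

theorem sum_range_reflectSub (y : ℕ → ℝ) {N r : ℕ} (hr : r < N) :
    ∑ t ∈ range (r + 1), reflectSub N y t =
      ∑ t ∈ range (r + 1), y t + ∑ t ∈ range (N - 1 - r), y t - ∑ t ∈ range N, y t := by
  have hreflect : ∑ t ∈ range (r + 1), y (N - 1 - t) = ∑ t ∈ Ico (N - 1 - r) N, y t := by
    rw [range_eq_Ico, sum_Ico_reflect y 0 (by omega : r + 1 ≤ N - 1 + 1)]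
    congr 2 <;> omega
  rw [← sum_range_add_sum_Ico y (by omega : N - 1 - r ≤ N)]
  simp only [reflectSub, sum_sub_distrib, hreflect]
  ring

variable {N m : ℕ} {Λ : ℝ} {y c : ℕ → ℝ}

theorem reflectSub_succ_sub
    (hstep : ∀ r, r + 1 < N → Λ * (y (r + 1) - y r) =
      2 * ∑ t ∈ range (r + 1), y t - ∑ t ∈ range N, y t + c r)
    {r : ℕ} (hr : 2 * r + 2 ≤ N) :
    Λ * (reflectSub N y (r + 1) - reflectSub N y r) =
      2 * ∑ t ∈ range (r + 1), reflectSub N y t + (c r + c (N - 2 - r)) := by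
  have h₁ := hstep r (by omega)
  have h₂ := hstep (N - 2 - r) (by omega)
  rw [show N - 2 - r + 1 = N - 1 - r by omega] at h₂
  rw [sum_range_reflectSub y (by omega), show N - 1 - r = N - 2 - r + 1 by omega]
  simp only [reflectSub, show N - 1 - (r + 1) = N - 2 - r by omega,
    show N - 1 - r = N - 2 - r + 1 by omega] at h₂ ⊢
  linear_combination h₁ + h₂

theorem sum_range_lt_of_reflectSub (hΛ : 0 < Λ)
    (hstep : ∀ r, r + 1 < N → Λ * (y (r + 1) - y r) =
      2 * ∑ t ∈ range (r + 1), y t - ∑ t ∈ range N, y t + c r)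
    (hm : 2 * m + 2 ≤ N) (hc_eq : ∀ r < m, c r + c (N - 2 - r) = 0)
    (hc_neg : ∀ r, m ≤ r → 2 * r + 2 ≤ N → c r + c (N - 2 - r) < 0) :
    ∑ t ∈ range N, y t < ∑ t ∈ range (m + 1), y t + ∑ t ∈ range (N - 1 - m), y t := by
  set ν := reflectSub N y
  have hrec : ∀ r, 2 * r + 2 ≤ N → Λ * (ν (r + 1) - ν r) =
      2 * ∑ t ∈ range (r + 1), ν t + (c r + c (N - 2 - r)) :=
    fun r hr => reflectSub_succ_sub hstep hr
  set n := N / 2 - 1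
  have hν₀ : 0 < ν 0 := by
    by_contra! hν₀
    have hmono := apply_zero_le_of_two_mul_sum_le (a := -ν) (n := n) hΛ (by simpa using hν₀)
      fun r hr => by
        have hc : c r + c (N - 2 - r) ≤ 0 := by
          rcases lt_or_ge r m with hrm | hrm
          · exact (hc_eq r hrm).le
          · exact (hc_neg r hrm (by omega)).le
        simp only [Pi.neg_apply, sum_neg_distrib]
        linarith [hrec r (by omega)]
    have hneg : ∀ r ≤ n, ν r ≤ 0 := fun r hr => by
      have := hmono r hr
      simp only [Pi.neg_apply, neg_le_neg_iff] at this
      linarith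
    -- the centre of the reflection pins `ν (n + 1)` to `-ν n` or to `0`
    have hcentre : 0 ≤ ν (n + 1) := by
      rcases Nat.even_or_odd N with ⟨k, hk⟩ | ⟨k, hk⟩
      · have : ν (n + 1) = -ν n := by
          simp only [ν, reflectSub, show N - 1 - (n + 1) = n by omega,
            show N - 1 - n = n + 1 by omega]
          ring
        linarith [hneg n le_rfl]
      · simp [ν, reflectSub, show N - 1 - (n + 1) = n + 1 by omega]
    have hsum : ∑ t ∈ range (n + 1), ν t ≤ 0 :=
      sum_nonpos fun t ht => hneg t (Nat.lt_succ_iff.mp (mem_range.mp ht))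
    have hincr : 0 ≤ Λ * (ν (n + 1) - ν n) := mul_nonneg hΛ.le (by linarith [hneg n le_rfl])
    linarith [hrec n (by omega), hc_neg n (by omega) (by omega)]
  have hpos : ∀ r ≤ m, 0 < ν r := fun r hr =>
    hν₀.trans_le <| apply_zero_le_of_two_mul_sum_le hΛ hν₀.le
      (fun r hr => by linarith [hrec r (by omega), hc_eq r hr]) r hr
  have := sum_pos (fun t ht => hpos t (Nat.lt_succ_iff.mp (mem_range.mp ht))) nonempty_range_add_one
  rw [sum_range_reflectSub y (by omega)] at this
  linarith

theorem add_apply_reflect_eq_zero {c : ℕ → ℝ} {X : ℝ} {l m : ℕ} (hml : m < l)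
    (hc_lt : ∀ r < l, c r = -X) (hc_gt : ∀ r, l < r → r + 1 < l + m + 2 → c r = X) :
    ∀ r < m, c r + c (l + m + 2 - 2 - r) = 0 := fun r hr => by
  rw [hc_lt r (by omega), hc_gt _ (by omega) (by omega)]
  ring

theorem add_apply_reflect_neg {c : ℕ → ℝ} {X : ℝ} {l m : ℕ} (hX : 0 < X) (hml : m < l)
    (hc_lt : ∀ r < l, c r = -X) (hc_l : c l < X) :
    ∀ r, m ≤ r → 2 * r + 2 ≤ l + m + 2 → c r + c (l + m + 2 - 2 - r) < 0 := fun r _ hr => by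
  rw [hc_lt r (by omega)]
  rcases (show l + m + 2 - 2 - r ≤ l by omega).lt_or_eq with h | h
  · rw [hc_lt _ h]
    linarith
  · rw [h]
    linarith

end Reflection

section PendantPath

variable {V : Type} {G : SimpleGraph V}

def natPath {s : ℕ} (p : Fin (s + 1) → V) (i : ℕ) : V := p (Fin.clamp i s)

theorem natPath_of_le {s : ℕ} (p : Fin (s + 1) → V) {i : ℕ} (hi : i ≤ s) :
    natPath p i = p ⟨i, Nat.lt_succ_of_le hi⟩ := by
  simp [natPath, Fin.clamp, hi]

@[simp]
theorem natPath_zero {s : ℕ} (p : Fin (s + 1) → V) : natPath p 0 = p 0 := by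
  rw [natPath_of_le p (Nat.zero_le s)]
  rfl

/-- `P_l` run from its leaf to its root, followed by `P_m` run from its root to its leaf. -/
def joinPath {l m : ℕ} (p : Fin (l + 1) → V) (q : Fin (m + 1) → V) (r : ℕ) : V :=
  if r ≤ l then natPath p (l - r) else natPath q (r - (l + 1))

variable [Fintype V] {s : ℕ} {p : Fin (s + 1) → V}

namespace IsPendantPath

variable (hp : IsPendantPath G s p)
include hp

theorem eq_of_natPath_eq {i j : ℕ} (hi : i ≤ s) (hj : j ≤ s) (h : natPath p i = natPath p j) :
    i = j := by
  rw [natPath_of_le p hi, natPath_of_le p hj] at h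
  exact congrArg Fin.val (hp.inj h)

theorem adj_natPath_succ {i : ℕ} (hi : i < s) : G.Adj (natPath p i) (natPath p (i + 1)) := by
  rw [natPath_of_le p hi.le, natPath_of_le p hi]
  exact hp.adj ⟨i, hi⟩

theorem ncard_neighborSet_natPath_le {i : ℕ} (h₁ : 1 ≤ i) (hi : i ≤ s) :
    (G.neighborSet (natPath p i)).ncard ≤ 2 := by
  rcases hi.lt_or_eq with hi | rfl
  · rw [natPath_of_le p hi.le, hp.mid_deg ⟨i, by omega⟩ h₁ hi]
  · rw [natPath_of_le p le_rfl, ← Fin.last, hp.last_deg]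
    omega

theorem eq_natPath_of_adj {i : ℕ} {v : V} (h₁ : 1 ≤ i) (hi : i ≤ s)
    (h : G.Adj (natPath p i) v) :
    v = natPath p (i - 1) ∨ (i < s ∧ v = natPath p (i + 1)) := by
  have hprev : G.Adj (natPath p i) (natPath p (i - 1)) := by
    simpa [show i - 1 + 1 = i by omega] using (hp.adj_natPath_succ (i := i - 1) (by omega)).symm
  rcases hi.lt_or_eq with hi | rfl
  · have hne : natPath p (i - 1) ≠ natPath p (i + 1) := fun h => by
      have := hp.eq_of_natPath_eq (by omega) (by omega) h
      omega
    have hnbr : {natPath p (i - 1), natPath p (i + 1)} = G.neighborSet (natPath p i) := by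
      refine Set.eq_of_subset_of_ncard_le (Set.pair_subset hprev (hp.adj_natPath_succ hi)) ?_
        (Set.toFinite _)
      rw [natPath_of_le p hi.le, hp.mid_deg ⟨i, by omega⟩ h₁ hi, Set.ncard_pair hne]
    have hv : v ∈ G.neighborSet (natPath p i) := h
    rw [← hnbr] at hv
    rcases hv with hv | hv
    · exact .inl hv
    · exact .inr ⟨hi, hv⟩
  · have hnbr : {natPath p (i - 1)} = G.neighborSet (natPath p i) := by
      refine Set.eq_of_subset_of_ncard_le (Set.singleton_subset_iff.mpr hprev) ?_
        (Set.toFinite _)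
      rw [natPath_of_le p le_rfl, ← Fin.last, hp.last_deg, Set.ncard_singleton]
    have hv : v ∈ G.neighborSet (natPath p i) := h
    rw [← hnbr] at hv
    exact .inl hv

theorem natPath_ne_of_two_lt_ncard {v : V} (hv : 2 < (G.neighborSet v).ncard) {i : ℕ}
    (h₁ : 1 ≤ i) (hi : i ≤ s) : natPath p i ≠ v := fun h => by
  have := hp.ncard_neighborSet_natPath_le h₁ hi
  rw [h] at this
  omega

variable (hG : G.Connected)
include hG

theorem dist_natPath_le {i j : ℕ} (hij : i ≤ j) (hj : j ≤ s) :
    G.dist (natPath p i) (natPath p j) ≤ j - i := by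
  induction j, hij using Nat.le_induction with
  | base => simp
  | succ j hij ih =>
    have := hG.dist_triangle (u := natPath p i) (v := natPath p j) (w := natPath p (j + 1))
    rw [dist_eq_one_iff_adj.mpr (hp.adj_natPath_succ (by omega))] at this
    have := ih (by omega)
    omega

theorem add_dist_le_length_add_of_le {i j : ℕ} (hji : j ≤ i) (hi : i ≤ s) {u : V}
    (W : G.Walk (natPath p j) u) : j + G.dist (natPath p i) u ≤ W.length + i := by
  have h₁ := hp.dist_natPath_le hG hji hi
  have h₂ := hG.dist_triangle (u := natPath p i) (v := natPath p j) (w := u)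
  have h₃ := dist_le W
  rw [dist_comm] at h₁
  omega

/-- The interior vertices of a pendant path have no neighbours off the path, so a walk from
`p j` to a vertex outside `p (i + 1), …, p s` has to pass through `p i`. -/
theorem add_dist_le_length_add {i : ℕ} (hi : i ≤ s) {v u : V} (W : G.Walk v u) (j : ℕ)
    (hv : v = natPath p j) (hj : j ≤ s) (hu : ∀ t, i < t → t ≤ s → u ≠ natPath p t) :
    j + G.dist (natPath p i) u ≤ W.length + i := by
  induction W generalizing j with
  | nil =>
    subst hv
    exact hp.add_dist_le_length_add_of_le hG (by by_contra! hij; exact hu j hij hj rfl) hi .nil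
  | cons hadj W ih =>
    subst hv
    rcases le_or_gt j i with hji | hij
    · exact hp.add_dist_le_length_add_of_le hG hji hi _
    rw [Walk.length_cons]
    rcases hp.eq_natPath_of_adj (by omega) hj hadj with rfl | ⟨hjs, rfl⟩
    · have := ih (j - 1) rfl (by omega) hu
      omega
    · have := ih (j + 1) rfl hjs hu
      omega

theorem dist_natPath {i j : ℕ} (hij : i ≤ j) (hj : j ≤ s) :
    G.dist (natPath p i) (natPath p j) = j - i := by
  refine le_antisymm (hp.dist_natPath_le hG hij hj) ?_
  obtain ⟨W, hW⟩ := hG.exists_walk_length_eq_dist (natPath p j) (natPath p i)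
  have := hp.add_dist_le_length_add hG (hij.trans hj) W j rfl hj fun t ht hts h => by
    have := hp.eq_of_natPath_eq (hij.trans hj) hts h
    omega
  rw [dist_self, hW, dist_comm] at this
  omega

theorem dist_natPath_of_forall_ne {u : V} (hu : ∀ t, 1 ≤ t → t ≤ s → u ≠ natPath p t)
    {j : ℕ} (hj : j ≤ s) : G.dist (natPath p j) u = j + G.dist (p 0) u := by
  refine le_antisymm ?_ ?_
  · have := hG.dist_triangle (u := natPath p j) (v := p 0) (w := u)
    have := hp.dist_natPath hG (Nat.zero_le j) hj
    rw [natPath_zero, dist_comm] at this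
    omega
  · obtain ⟨W, hW⟩ := hG.exists_walk_length_eq_dist (natPath p j) u
    have := hp.add_dist_le_length_add hG (Nat.zero_le s) W j rfl hj hu
    rw [natPath_zero] at this
    omega

theorem dist_natPath_of_two_lt_ncard {v : V} (hv : 2 < (G.neighborSet v).ncard) {j : ℕ}
    (hj : j ≤ s) : G.dist (natPath p j) v = j + G.dist (p 0) v :=
  hp.dist_natPath_of_forall_ne hG
    (fun _ ht hts => (hp.natPath_ne_of_two_lt_ncard hv ht hts).symm) hj

end IsPendantPath

end PendantPath

section Sums

variable {V M : Type} [AddCommMonoid M] {l m : ℕ} (p : Fin (l + 1) → V) (q : Fin (m + 1) → V)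
  (f : V → M)

theorem sum_univ_eq_sum_range_natPath :
    ∑ j : Fin (l + 1), f (p j) = ∑ i ∈ range (l + 1), f (natPath p i) := by
  rw [← Fin.sum_univ_eq_sum_range]
  exact sum_congr rfl fun j _ => by rw [natPath_of_le p (Nat.lt_succ_iff.mp j.isLt)]

theorem sum_range_joinPath_eq_sum_natPath :
    ∑ t ∈ range (l + 1), f (joinPath p q t) = ∑ i ∈ range (l + 1), f (natPath p i) := by
  rw [← sum_range_reflect]
  refine sum_congr rfl fun t ht => ?_
  have ht := mem_range.mp ht
  rw [joinPath, if_pos (by omega), show l - (l + 1 - 1 - t) = t by omega]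

theorem sum_range_joinPath :
    ∑ t ∈ range (l + m + 2), f (joinPath p q t) =
      ∑ t ∈ range (l + 1), f (joinPath p q t) + ∑ k ∈ range (m + 1), f (natPath q k) := by
  rw [show l + m + 2 = l + 1 + (m + 1) by ring, sum_range_add]
  congr 1
  refine sum_congr rfl fun k _ => ?_
  rw [joinPath, if_neg (by omega), show l + 1 + k - (l + 1) = k by omega]

end Sums

section TwoPendantPaths

variable {V : Type} [Fintype V] {G : SimpleGraph V} {l m : ℕ} {p : Fin (l + 1) → V}
  {q : Fin (m + 1) → V}

theorem natPath_ne_natPath_of_adj (hG : G.Connected) (hp : IsPendantPath G l p)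
    (hq : IsPendantPath G m q) (hadj : G.Adj (p 0) (q 0)) {i k : ℕ} (hi : i ≤ l) (hk : k ≤ m) :
    natPath p i ≠ natPath q k := by
  intro h
  rcases Nat.eq_zero_or_pos i with rfl | hi₀ <;> rcases Nat.eq_zero_or_pos k with rfl | hk₀
  · simp only [natPath_zero] at h
    exact hadj.ne h
  · exact hq.natPath_ne_of_two_lt_ncard hp.root_deg hk₀ hk (by rw [← h, natPath_zero])
  · exact hp.natPath_ne_of_two_lt_ncard hq.root_deg hi₀ hi (by rw [h, natPath_zero])
  · -- measured from the roots, the common vertex would be both one step further and one step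
    -- closer along `P_m` than along `P_l`
    have hpq := hp.dist_natPath_of_two_lt_ncard hG hq.root_deg hi
    have hqp := hq.dist_natPath_of_two_lt_ncard hG hp.root_deg hk
    have hpp := hp.dist_natPath hG (Nat.zero_le i) hi
    have hqq := hq.dist_natPath hG (Nat.zero_le k) hk
    rw [natPath_zero, dist_comm] at hpp hqq
    rw [h, hqq, dist_eq_one_iff_adj.mpr hadj] at hpq
    rw [← h, hpp, dist_comm, dist_eq_one_iff_adj.mpr hadj] at hqp
    omega

theorem dist_natPath_natPath (hG : G.Connected) (hp : IsPendantPath G l p)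
    (hq : IsPendantPath G m q) (hadj : G.Adj (p 0) (q 0)) {i k : ℕ} (hi : i ≤ l) (hk : k ≤ m) :
    G.dist (natPath p i) (natPath q k) = i + 1 + k := by
  have h₁ := hq.dist_natPath_of_forall_ne hG (u := natPath p i)
    (fun _ _ ht => natPath_ne_natPath_of_adj hG hp hq hadj hi ht) hk
  have h₂ := hp.dist_natPath_of_two_lt_ncard hG hq.root_deg hi
  rw [dist_comm, h₁, dist_comm, h₂, dist_eq_one_iff_adj.mpr hadj]
  ring

theorem dist_joinPath (hG : G.Connected) (hp : IsPendantPath G l p) (hq : IsPendantPath G m q)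
    (hadj : G.Adj (p 0) (q 0)) {r t : ℕ} (hrt : r ≤ t) (ht : t < l + m + 2) :
    G.dist (joinPath p q r) (joinPath p q t) = t - r := by
  unfold joinPath
  split_ifs with hr ht'
  · rw [dist_comm, hp.dist_natPath hG (by omega) (by omega)]
    omega
  · rw [dist_natPath_natPath hG hp hq hadj (by omega) (by omega)]
    omega
  · omega
  · rw [hq.dist_natPath hG (by omega) (by omega)]
    omega

variable [DecidableEq V]

theorem dist_joinPath_of_le (hG : G.Connected) (hp : IsPendantPath G l p) {u : V}
    (hu : u ∉ (range (l + m + 2)).image (joinPath p q)) {r : ℕ} (hr : r ≤ l) :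
    G.dist (joinPath p q r) u = (l - r) + G.dist (p 0) u := by
  rw [joinPath, if_pos hr]
  refine hp.dist_natPath_of_forall_ne hG (fun t _ htl h => hu ?_) (by omega)
  refine mem_image.mpr ⟨l - t, mem_range.mpr (by omega), ?_⟩
  rw [joinPath, if_pos (by omega), show l - (l - t) = t by omega, h]

theorem dist_joinPath_of_lt (hG : G.Connected) (hq : IsPendantPath G m q) {u : V}
    (hu : u ∉ (range (l + m + 2)).image (joinPath p q)) {r : ℕ} (hlr : l < r)
    (hr : r < l + m + 2) :
    G.dist (joinPath p q r) u = (r - (l + 1)) + G.dist (q 0) u := by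
  rw [joinPath, if_neg (by omega)]
  refine hq.dist_natPath_of_forall_ne hG (fun t _ htm h => hu ?_) (by omega)
  refine mem_image.mpr ⟨l + 1 + t, mem_range.mpr (by omega), ?_⟩
  rw [joinPath, if_neg (by omega), show l + 1 + t - (l + 1) = t by omega, h]

theorem exists_adj_not_mem_joinPath (hG : G.Connected) (hp : IsPendantPath G l p)
    (hq : IsPendantPath G m q) (hadj : G.Adj (p 0) (q 0)) :
    ∃ z, G.Adj (q 0) z ∧ z ∉ (range (l + m + 2)).image (joinPath p q) := by
  have hq₀ : joinPath p q (l + 1) = q 0 := by simp [joinPath]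
  have hnsub : ¬ G.neighborSet (q 0) ⊆ {p 0, natPath q 1} := fun hsub => by
    have := Set.ncard_le_ncard hsub (Set.toFinite _)
    have := Set.ncard_insert_le (p 0) {natPath q 1}
    rw [Set.ncard_singleton] at this
    linarith [hq.root_deg]
  obtain ⟨z, hz, hz'⟩ := Set.not_subset.mp hnsub
  refine ⟨z, hz, ?_⟩
  rintro hzS
  obtain ⟨r, hr, rfl⟩ := mem_image.mp hzS
  have hr := mem_range.mp hr
  have hdist : G.dist (joinPath p q (l + 1)) (joinPath p q r) = 1 := by
    rwa [hq₀, dist_eq_one_iff_adj]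
  rcases le_total r (l + 1) with hrl | hlr
  · rw [dist_comm, dist_joinPath hG hp hq hadj hrl (by omega)] at hdist
    apply hz'
    left
    simp [joinPath, show r ≤ l by omega, show l - r = 0 by omega]
  · rw [dist_joinPath hG hp hq hadj hlr hr] at hdist
    apply hz'
    right
    simp [joinPath, show ¬ r ≤ l by omega, show r - (l + 1) = 1 by omega]

end TwoPendantPaths

section DistanceEigenvector

variable {V : Type} [Fintype V] {G : SimpleGraph V} {x : V → ℝ} {Λ : ℝ}

theorem distMatrix_mulVec_apply (x : V → ℝ) (v : V) :
    (distMatrix G).mulVec x v = ∑ u, (G.dist v u : ℝ) * x u := rfl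

theorem pos_of_distMatrix_mulVec_eq_smul (heig : (distMatrix G).mulVec x = Λ • x)
    (hx : ∀ v, 0 < x v) {a b : V} (hab : G.Adj a b) : 0 < Λ := by
  have hrow := congrFun heig a
  rw [distMatrix_mulVec_apply, Pi.smul_apply, smul_eq_mul] at hrow
  have hb : x b ≤ ∑ u, (G.dist a u : ℝ) * x u := by
    simpa [dist_eq_one_iff_adj.mpr hab] using
      single_le_sum (f := fun u => (G.dist a u : ℝ) * x u)
        (fun u _ => mul_nonneg (Nat.cast_nonneg _) (hx u).le) (mem_univ b)
  by_contra! hΛ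
  nlinarith [hx a, hx b]

/-- Each vertex of the geodesic `w` contributes `±1` to the difference of two consecutive rows. -/
theorem mul_sub_eq_of_dist_eq_sub [DecidableEq V] (heig : (distMatrix G).mulVec x = Λ • x)
    {w : ℕ → V} {N : ℕ} (hw : ∀ r t, r ≤ t → t < N → G.dist (w r) (w t) = t - r)
    {r : ℕ} (hr : r + 1 < N) :
    Λ * (x (w (r + 1)) - x (w r)) =
      2 * ∑ t ∈ range (r + 1), x (w t) - ∑ t ∈ range N, x (w t) +
        ∑ u ∈ ((range N).image w)ᶜ, ((G.dist (w (r + 1)) u : ℝ) - G.dist (w r) u) * x u := by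
  have hinj : Set.InjOn w (range N) := fun a ha b hb h => by
    have ha := mem_range.mp ha
    have hb := mem_range.mp hb
    rcases le_total a b with hab | hba
    · have := hw a b hab hb
      rw [h, dist_self] at this
      omega
    · have := hw b a hba ha
      rw [h, dist_self] at this
      omega
  have hrow : ∀ v, Λ * x v = ∑ t ∈ range N, (G.dist v (w t) : ℝ) * x (w t) +
      ∑ u ∈ ((range N).image w)ᶜ, (G.dist v u : ℝ) * x u := fun v => by
    rw [← sum_image (f := fun u => (G.dist v u : ℝ) * x u) hinj, sum_add_sum_compl,
      ← distMatrix_mulVec_apply, heig, Pi.smul_apply, smul_eq_mul]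
  have hbefore : ∑ t ∈ range (r + 1),
      ((G.dist (w (r + 1)) (w t) : ℝ) * x (w t) - (G.dist (w r) (w t) : ℝ) * x (w t)) =
      ∑ t ∈ range (r + 1), x (w t) := sum_congr rfl fun t ht => by
    have ht := mem_range.mp ht
    rw [dist_comm, hw t (r + 1) (by omega) hr, dist_comm, hw t r (by omega) (by omega),
      show r + 1 - t = r - t + 1 by omega]
    push_cast
    ring
  have hafter : ∑ t ∈ Ico (r + 1) N,
      ((G.dist (w (r + 1)) (w t) : ℝ) * x (w t) - (G.dist (w r) (w t) : ℝ) * x (w t)) =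
      -∑ t ∈ Ico (r + 1) N, x (w t) := by
    rw [← sum_neg_distrib]
    refine sum_congr rfl fun t ht => ?_
    have ht := mem_Ico.mp ht
    rw [hw (r + 1) t ht.1 ht.2, hw r t (by omega) ht.2, show t - r = t - (r + 1) + 1 by omega]
    push_cast
    ring
  rw [mul_sub, hrow, hrow, ← sum_range_add_sum_Ico (fun t => x (w t)) hr.le]
  have hsplit := sum_range_add_sum_Ico (fun t => (G.dist (w (r + 1)) (w t) : ℝ) * x (w t) -
    (G.dist (w r) (w t) : ℝ) * x (w t)) hr.le
  simp only [sum_sub_distrib, sub_mul] at hsplit hbefore hafter ⊢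
  linarith

end DistanceEigenvector

section Increments

variable {V : Type} [Fintype V] [DecidableEq V] {G : SimpleGraph V} {l m : ℕ}
  {p : Fin (l + 1) → V} {q : Fin (m + 1) → V} {x : V → ℝ}

theorem sum_dist_joinPath_succ_sub_of_lt (hG : G.Connected) (hp : IsPendantPath G l p) {r : ℕ}
    (hr : r < l) :
    ∑ u ∈ ((range (l + m + 2)).image (joinPath p q))ᶜ,
        ((G.dist (joinPath p q (r + 1)) u : ℝ) - G.dist (joinPath p q r) u) * x u =
      -∑ u ∈ ((range (l + m + 2)).image (joinPath p q))ᶜ, x u := by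
  rw [← sum_neg_distrib]
  refine sum_congr rfl fun u hu => ?_
  have hu := mem_compl.mp hu
  rw [dist_joinPath_of_le hG hp hu hr, dist_joinPath_of_le hG hp hu hr.le,
    show l - r = l - (r + 1) + 1 by omega]
  push_cast
  ring

theorem sum_dist_joinPath_succ_sub_of_gt (hG : G.Connected) (hq : IsPendantPath G m q) {r : ℕ}
    (hlr : l < r) (hr : r + 1 < l + m + 2) :
    ∑ u ∈ ((range (l + m + 2)).image (joinPath p q))ᶜ,
        ((G.dist (joinPath p q (r + 1)) u : ℝ) - G.dist (joinPath p q r) u) * x u =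
      ∑ u ∈ ((range (l + m + 2)).image (joinPath p q))ᶜ, x u := by
  refine sum_congr rfl fun u hu => ?_
  have hu := mem_compl.mp hu
  rw [dist_joinPath_of_lt hG hq hu (by omega) hr, dist_joinPath_of_lt hG hq hu hlr (by omega),
    show r + 1 - (l + 1) = r - (l + 1) + 1 by omega]
  push_cast
  ring

theorem sum_dist_joinPath_succ_sub_lt (hG : G.Connected) (hp : IsPendantPath G l p)
    (hq : IsPendantPath G m q) (hadj : G.Adj (p 0) (q 0)) (hx : ∀ v, 0 < x v) :
    ∑ u ∈ ((range (l + m + 2)).image (joinPath p q))ᶜ,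
        ((G.dist (joinPath p q (l + 1)) u : ℝ) - G.dist (joinPath p q l) u) * x u <
      ∑ u ∈ ((range (l + m + 2)).image (joinPath p q))ᶜ, x u := by
  obtain ⟨z, hz, hzS⟩ := exists_adj_not_mem_joinPath hG hp hq hadj
  have hincr : ∀ u ∈ ((range (l + m + 2)).image (joinPath p q))ᶜ,
      (G.dist (joinPath p q (l + 1)) u : ℝ) - G.dist (joinPath p q l) u =
        G.dist (q 0) u - G.dist (p 0) u := fun u hu => by
    have hu := mem_compl.mp hu
    rw [dist_joinPath_of_lt hG hq hu (by omega) (by omega), dist_joinPath_of_le hG hp hu le_rfl]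
    simp
  refine sum_lt_sum (fun u hu => ?_) ⟨z, mem_compl.mpr hzS, ?_⟩
  · have := hG.dist_triangle (u := q 0) (v := p 0) (w := u)
    rw [dist_eq_one_iff_adj.mpr hadj.symm] at this
    rw [hincr u hu]
    have : (G.dist (q 0) u : ℝ) ≤ 1 + G.dist (p 0) u := by exact_mod_cast this
    nlinarith [hx u]
  · have hpz : p 0 ≠ z := fun h => hzS (mem_image.mpr ⟨l, mem_range.mpr (by omega), by
      simp [joinPath, ← h]⟩)
    have := hG.pos_dist_of_ne hpz
    rw [hincr z (mem_compl.mpr hzS), dist_eq_one_iff_adj.mpr hz, Nat.cast_one]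
    have : (1 : ℝ) ≤ G.dist (p 0) z := by exact_mod_cast this
    nlinarith [hx z]

theorem sum_compl_image_joinPath_pos (hG : G.Connected) (hp : IsPendantPath G l p)
    (hq : IsPendantPath G m q) (hadj : G.Adj (p 0) (q 0)) (hx : ∀ v, 0 < x v) :
    0 < ∑ u ∈ ((range (l + m + 2)).image (joinPath p q))ᶜ, x u := by
  obtain ⟨z, -, hzS⟩ := exists_adj_not_mem_joinPath hG hp hq hadj
  exact sum_pos' (fun u _ => (hx u).le) ⟨z, mem_compl.mpr hzS, hx z⟩

end Increments

/-- If `P_l` (of length `l`, root `p 0`) and `P_m` (of length `m`,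
root `q 0`) are pendant paths of a connected graph `G` whose roots are adjacent and
`l > m`, and `x` is a positive eigenvector of the distance matrix for `Λ₁(G)`,
then `∑_{j ∈ V(P_l)} x_j > ∑_{j ∈ V(P_m)} x_j`. -/
theorem sum_pendantPath_lt_sum_pendantPath {V : Type} [Fintype V] (G : SimpleGraph V)
    (hG : G.Connected) (l m : ℕ) (p : Fin (l + 1) → V) (q : Fin (m + 1) → V)
    (hp : IsPendantPath G l p) (hq : IsPendantPath G m q)
    (hadj : G.Adj (p 0) (q 0)) (hlm : m < l)
    (x : V → ℝ) (hx : ∀ w, 0 < x w)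
    (heig : (distMatrix G).mulVec x = distSpectralRadius G • x) :
    ∑ j : Fin (m + 1), x (q j) < ∑ j : Fin (l + 1), x (p j) := by
  classical
  set w := joinPath p q
  set X := ∑ u ∈ ((range (l + m + 2)).image w)ᶜ, x u
  set c : ℕ → ℝ := fun r =>
    ∑ u ∈ ((range (l + m + 2)).image w)ᶜ, ((G.dist (w (r + 1)) u : ℝ) - G.dist (w r) u) * x u
  have hc_lt : ∀ r < l, c r = -X := fun r hr => sum_dist_joinPath_succ_sub_of_lt hG hp hr
  have hc_eq := add_apply_reflect_eq_zero hlm hc_lt fun r hlr hr =>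
    sum_dist_joinPath_succ_sub_of_gt hG hq hlr hr
  have hc_neg := add_apply_reflect_neg (sum_compl_image_joinPath_pos hG hp hq hadj hx) hlm hc_lt
    (sum_dist_joinPath_succ_sub_lt hG hp hq hadj hx)
  have hsep := sum_range_lt_of_reflectSub (y := fun t => x (w t))
    (pos_of_distMatrix_mulVec_eq_smul heig hx hadj)
    (fun r hr => mul_sub_eq_of_dist_eq_sub heig (fun _ _ => dist_joinPath hG hp hq hadj) hr)
    (by omega) hc_eq hc_neg
  have hmono : ∑ t ∈ range (m + 1), x (w t) ≤ ∑ t ∈ range (l + 1), x (w t) :=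
    sum_le_sum_of_subset_of_nonneg (range_subset_range.mpr (by omega)) fun _ _ _ => (hx _).le
  rw [show l + m + 2 - 1 - m = l + 1 by omega, sum_range_joinPath] at hsep
  rw [sum_univ_eq_sum_range_natPath, sum_univ_eq_sum_range_natPath,
    ← sum_range_joinPath_eq_sum_natPath p q]
  linarith
end

section
/- Let G be a simple connected graph, let u be a vertex of G, and let C_1 be a connected component of G − u. Suppose v is a vertex of C_1 adjacent to u with N_{C_1}(u) \ {v} = N_{C_1}(v), and let w be a vertex of G not in V(C_1) ∪ {u}. Let x = (x_1,...,x_n)^t be a positive eigenvector of the distance matrix D(G) corresponding to Λ1(G). Then x_w + x_u − x_v > 0. -/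
open Matrix

/-- `C` is (the vertex set of) a connected component of `G - u`: it does not contain
`u`, is nonempty, induces a connected subgraph, and is closed under adjacency
within `G - u`. -/
def IsComponentOfDelete {V : Type} (G : SimpleGraph V) (u : V) (C : Set V) : Prop :=
  u ∉ C ∧ C.Nonempty ∧ (G.induce C).Connected ∧
    ∀ a ∈ C, ∀ b : V, b ≠ u → G.Adj a b → b ∈ C

/-- A walk from inside `C` to a vertex outside `C` other than `u` must pass through `u`. -/
lemma aux_through_u {V : Type} (G : SimpleGraph V) (u : V) (C : Set V)
    (hclose : ∀ a ∈ C, ∀ b : V, b ≠ u → G.Adj a b → b ∈ C) :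
    ∀ {a b : V} (p : G.Walk a b), a ∈ C → b ∉ C → b ≠ u → u ∈ p.support := by
  intro a b p
  induction p with
  | nil => intro ha hb _; exact absurd ha hb
  | @cons a c b h p ih =>
    intro ha hb hbu
    by_cases hcu : c = u
    · subst hcu; simp [SimpleGraph.Walk.support_cons]
    · have hc : c ∈ C := hclose a ha c hcu h
      simp [SimpleGraph.Walk.support_cons, ih hc hb hbu]

/-- Let `C` be a component of `G - u`, let `v ∈ C` be adjacent to `u`
with `N_C(u) \ {v} = N_C(v)`, and let `w ∉ V(C) ∪ {u}`.  If `x` is a positive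
eigenvector of the distance matrix for `Λ₁(G)`, then `x_w + x_u - x_v > 0`. -/
theorem eigenvector_entry_ineq {V : Type} [Fintype V] (G : SimpleGraph V)
    (hG : G.Connected) (u : V) (C : Set V) (hC : IsComponentOfDelete G u C)
    (v : V) (hvC : v ∈ C) (huv : G.Adj u v)
    (hN : {w ∈ C | G.Adj u w} \ {v} = {w ∈ C | G.Adj v w})
    (w : V) (hw : w ∉ C) (hwu : w ≠ u)
    (x : V → ℝ) (hx : ∀ a, 0 < x a)
    (heig : (distMatrix G).mulVec x = distSpectralRadius G • x) :
    0 < x w + x u - x v := by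
  classical
  obtain ⟨huC, -, -, hclose⟩ := hC
  set Λ := distSpectralRadius G with hΛdef
  have hrow : ∀ i, ∑ j, (G.dist i j : ℝ) * x j = Λ * x i := by
    intro i
    have := congrFun heig i
    simpa [Matrix.mulVec, dotProduct, distMatrix, smul_eq_mul] using this
  have hduv : G.dist u v = 1 := SimpleGraph.dist_eq_one_iff_adj.mpr huv
  have hdvu : G.dist v u = 1 := SimpleGraph.dist_eq_one_iff_adj.mpr huv.symm
  -- triangle through u
  have hL2 : ∀ z, G.dist v z ≤ G.dist u z + 1 := by
    intro z
    calc G.dist v z ≤ G.dist v u + G.dist u z := hG.dist_triangle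
    _ = G.dist u z + 1 := by omega
  -- for z ∈ C, dist v z ≤ dist u z
  have hL3 : ∀ z ∈ C, G.dist v z ≤ G.dist u z := by
    intro z hz
    by_cases hzv : z = v
    · subst hzv; simp [SimpleGraph.dist_self]
    have huz : u ≠ z := fun h => huC (h ▸ hz)
    have hdne : G.dist u z ≠ 0 := (hG.pos_dist_of_ne huz).ne'
    obtain ⟨p, hp⟩ := SimpleGraph.exists_walk_of_dist_ne_zero hdne
    cases p with
    | nil => exact absurd rfl huz
    | @cons _ c _ h q =>
      rw [SimpleGraph.Walk.length_cons] at hp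
      by_cases hcC : c ∈ C
      · by_cases hcv : c = v
        · subst hcv
          have := SimpleGraph.dist_le q
          omega
        · have hvc : G.Adj v c := by
            have : c ∈ {w ∈ C | G.Adj v w} := by
              rw [← hN]; exact ⟨⟨hcC, h⟩, hcv⟩
            exact this.2
          have := SimpleGraph.dist_le (SimpleGraph.Walk.cons hvc q)
          rw [SimpleGraph.Walk.length_cons] at this
          omega
      · have hcu : c ≠ u := fun hh => G.irrefl (hh ▸ h)
        have hus : u ∈ q.reverse.support :=
          aux_through_u G u C hclose q.reverse hz hcC hcu
        rw [SimpleGraph.Walk.support_reverse, List.mem_reverse] at hus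
        have h1 := SimpleGraph.dist_le (q.dropUntil u hus)
        have h2 := SimpleGraph.Walk.length_dropUntil_le q hus
        omega
  -- positivity of Λ
  have hxv := hx v
  have hxu := hx u
  have hsumu : x v ≤ ∑ j, (G.dist u j : ℝ) * x j := by
    have h1 := Finset.single_le_sum (f := fun j => (G.dist u j : ℝ) * x j)
      (fun j _ => mul_nonneg (Nat.cast_nonneg _) (hx j).le) (Finset.mem_univ v)
    simpa [hduv] using h1
  have hΛpos : 0 < Λ := by
    rw [hrow u] at hsumu
    nlinarith
  -- termwise bound
  have hterm : ∀ j ∈ Finset.univ,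
      (if j = v then x j else 0) - (if j = w then x j else 0) ≤
        ((G.dist w j : ℝ) + (G.dist u j : ℝ) - (G.dist v j : ℝ)) * x j := by
    intro j _
    have hxj := hx j
    by_cases hjv : j = v
    · have hjw : j ≠ w := fun h => hw (h ▸ hjv ▸ hvC)
      have hduj : G.dist u j = 1 := by rw [hjv]; exact hduv
      have hdvj : G.dist v j = 0 := by rw [hjv]; exact SimpleGraph.dist_self
      have hd : (0:ℝ) ≤ (G.dist w j : ℝ) := Nat.cast_nonneg _
      simp only [if_pos hjv, if_neg hjw, sub_zero, hduj, hdvj, Nat.cast_zero, Nat.cast_one]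
      nlinarith
    · by_cases hjw : j = w
      · have hdwj : G.dist w j = 0 := by rw [hjw]; exact SimpleGraph.dist_self
        have h2 : (G.dist v j : ℝ) ≤ (G.dist u j : ℝ) + 1 := by exact_mod_cast hL2 j
        simp only [if_neg hjv, if_pos hjw, hdwj, Nat.cast_zero, zero_sub]
        nlinarith
      · simp only [if_neg hjv, if_neg hjw, sub_zero]
        by_cases hjC : j ∈ C
        · have h3 : (G.dist v j : ℝ) ≤ (G.dist u j : ℝ) := by exact_mod_cast hL3 j hjC
          have hd : (0:ℝ) ≤ (G.dist w j : ℝ) := Nat.cast_nonneg _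
          nlinarith
        · have hwj : w ≠ j := fun h => hjw h.symm
          have h1 : 0 < G.dist w j := hG.pos_dist_of_ne hwj
          have h1' : (1:ℝ) ≤ (G.dist w j : ℝ) := by exact_mod_cast h1
          have h2 : (G.dist v j : ℝ) ≤ (G.dist u j : ℝ) + 1 := by exact_mod_cast hL2 j
          nlinarith
  have hmain : x v - x w ≤ Λ * (x w + x u - x v) := by
    have hsum := Finset.sum_le_sum hterm
    have hL : ∑ j, ((if j = v then x j else 0) - (if j = w then x j else 0)) = x v - x w := by
      rw [Finset.sum_sub_distrib]
      simp
    have hR : ∑ j, ((G.dist w j : ℝ) + (G.dist u j : ℝ) - (G.dist v j : ℝ)) * x j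
        = Λ * (x w + x u - x v) := by
      have e : ∀ j, ((G.dist w j : ℝ) + (G.dist u j : ℝ) - (G.dist v j : ℝ)) * x j
          = (G.dist w j : ℝ) * x j + (G.dist u j : ℝ) * x j - (G.dist v j : ℝ) * x j := by
        intro j; ring
      rw [Finset.sum_congr rfl (fun j _ => e j), Finset.sum_sub_distrib,
        Finset.sum_add_distrib, hrow w, hrow u, hrow v]
      ring
    rw [hL, hR] at hsum
    exact hsum
  nlinarith [hx w]
end

section
/- Let G be a simple connected graph with adjacent vertices u and v, let k ≥ l ≥ 1, and let G_{k,l} be the graph obtained from G by attaching a pendant path of length k at u and a pendant path of length l at v. Label the vertices of G_{k,l} so that the path attached at u is 1 − 2 − ... − k − (k+1), where vertex 1 is the pendant endpoint and vertex k+1 = u, vertex k+2 = v, and the path attached at v is (k+2) − (k+3) − ... − (k+l+2), where vertex k+l+2 is the pendant endpoint. Let x = (x_1,...,x_n)^t be a positive eigenvector of the distance matrix D(G_{k,l}) corresponding to Λ1(G_{k,l}). Then the differences x_{l+k+3−i} − x_i for 1 ≤ i ≤ l+1 are either all non-positive or all non-negative. -/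
open Matrix

/-- The graph `G_{k,l}` obtained from `G` by attaching a pendant path of length `k`
at `u` (the new vertices are `Sum.inr (Sum.inl i)`, `i : Fin k`, where index `0` is
joined to `u` and index `i+1` is joined to index `i`) and a pendant path of length `l`
at `v` (the new vertices are `Sum.inr (Sum.inr i)`, `i : Fin l`). -/
def attachPaths {V : Type} (G : SimpleGraph V) (u v : V) (k l : ℕ) :
    SimpleGraph (V ⊕ (Fin k ⊕ Fin l)) :=
  SimpleGraph.fromRel (fun a b =>
    match a, b with
    | Sum.inl x, Sum.inl y => G.Adj x y
    | Sum.inl x, Sum.inr (Sum.inl i) => x = u ∧ (i : ℕ) = 0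
    | Sum.inl x, Sum.inr (Sum.inr i) => x = v ∧ (i : ℕ) = 0
    | Sum.inr (Sum.inl i), Sum.inr (Sum.inl j) => (j : ℕ) = (i : ℕ) + 1
    | Sum.inr (Sum.inr i), Sum.inr (Sum.inr j) => (j : ℕ) = (i : ℕ) + 1
    | _, _ => False)


/-- The labelling of the path vertices of `G_{k,l} = attachPaths G u v k l` used in the
paper: label `i` for `1 ≤ i ≤ k` is the vertex of the path attached at `u` at distance
`i - 1` from its pendant endpoint (so label `1` is the pendant endpoint and label `k`
is adjacent to `u`), label `k + 1` is `u`, label `k + 2` is `v`, and label `k + 2 + j`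
for `1 ≤ j ≤ l` is the vertex of the path attached at `v` at distance `j` from `v`
(so label `k + l + 2` is the pendant endpoint). -/
def pathLabel {V : Type} (u v : V) (k l : ℕ) (i : ℕ) : V ⊕ (Fin k ⊕ Fin l) :=
  if h : 1 ≤ i ∧ i ≤ k then Sum.inr (Sum.inl ⟨k - i, by omega⟩)
  else if i = k + 1 then Sum.inl u
  else if i = k + 2 then Sum.inl v
  else if h' : k + 3 ≤ i ∧ i ≤ k + l + 2 then Sum.inr (Sum.inr ⟨i - (k + 3), by omega⟩)
  else Sum.inl u

section Aux

open SimpleGraph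

variable {V : Type} {G : SimpleGraph V} {u v : V} {k l : ℕ}

lemma pl_low {t : ℕ} (h1 : 1 ≤ t) (h2 : t ≤ k) :
    pathLabel u v k l t = Sum.inr (Sum.inl ⟨k - t, by omega⟩) := by
  rw [pathLabel, dif_pos ⟨h1, h2⟩]

lemma pl_u : pathLabel u v k l (k + 1) = Sum.inl u := by
  rw [pathLabel, dif_neg (by omega), if_pos rfl]

lemma pl_v : pathLabel u v k l (k + 2) = Sum.inl v := by
  rw [pathLabel, dif_neg (by omega), if_neg (by omega), if_pos rfl]

lemma pl_high {t : ℕ} (h1 : k + 3 ≤ t) (h2 : t ≤ k + l + 2) :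
    pathLabel u v k l t = Sum.inr (Sum.inr ⟨t - (k + 3), by omega⟩) := by
  rw [pathLabel, dif_neg (by omega), if_neg (by omega), if_neg (by omega), dif_pos ⟨h1, h2⟩]

lemma pl_inv_left (j : Fin k) :
    (Sum.inr (Sum.inl j) : V ⊕ (Fin k ⊕ Fin l)) = pathLabel u v k l (k - j) := by
  rw [pl_low (by omega) (by omega)]
  have : k - (k - (j : ℕ)) = j := by omega
  simp [Fin.ext_iff, this]

lemma pl_inv_right (j : Fin l) :
    (Sum.inr (Sum.inr j) : V ⊕ (Fin k ⊕ Fin l)) = pathLabel u v k l (k + 3 + j) := by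
  rw [pl_high (by omega) (by omega)]
  simp [Fin.ext_iff]

lemma adj_inl_inl {a b : V} (h : G.Adj a b) :
    (attachPaths G u v k l).Adj (Sum.inl a) (Sum.inl b) := by
  rw [attachPaths, SimpleGraph.fromRel_adj]
  exact ⟨by simp [h.ne], Or.inl h⟩

lemma adj_u_p0 (hk : 0 < k) :
    (attachPaths G u v k l).Adj (Sum.inl u) (Sum.inr (Sum.inl ⟨0, hk⟩)) := by
  rw [attachPaths, SimpleGraph.fromRel_adj]
  exact ⟨by simp, Or.inl ⟨rfl, rfl⟩⟩

lemma adj_v_q0 (hl : 0 < l) :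
    (attachPaths G u v k l).Adj (Sum.inl v) (Sum.inr (Sum.inr ⟨0, hl⟩)) := by
  rw [attachPaths, SimpleGraph.fromRel_adj]
  exact ⟨by simp, Or.inl ⟨rfl, rfl⟩⟩

lemma adj_pp {i j : Fin k} (hij : (i : ℕ) = j + 1 ∨ (j : ℕ) = i + 1) :
    (attachPaths G u v k l).Adj (Sum.inr (Sum.inl i)) (Sum.inr (Sum.inl j)) := by
  rw [attachPaths, SimpleGraph.fromRel_adj]
  refine ⟨by simp [Fin.ext_iff]; omega, ?_⟩
  rcases hij with h | h
  · exact Or.inr h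
  · exact Or.inl h

lemma adj_qq {i j : Fin l} (hij : (i : ℕ) = j + 1 ∨ (j : ℕ) = i + 1) :
    (attachPaths G u v k l).Adj (Sum.inr (Sum.inr i)) (Sum.inr (Sum.inr j)) := by
  rw [attachPaths, SimpleGraph.fromRel_adj]
  refine ⟨by simp [Fin.ext_iff]; omega, ?_⟩
  rcases hij with h | h
  · exact Or.inr h
  · exact Or.inl h

lemma adj_P (huv : G.Adj u v) (hk : 1 ≤ k) (hl : 1 ≤ l) {t : ℕ} (h1 : 1 ≤ t)
    (h2 : t + 1 ≤ k + l + 2) :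
    (attachPaths G u v k l).Adj (pathLabel u v k l t) (pathLabel u v k l (t + 1)) := by
  rcases lt_or_ge t k with h | h
  · rw [pl_low h1 (by omega), pl_low (by omega) (by omega)]
    exact adj_pp (by simp; omega)
  rcases eq_or_lt_of_le h with h' | h'
  · rw [pl_low h1 (by omega), show t + 1 = k + 1 by omega, pl_u]
    have e : (⟨k - t, by omega⟩ : Fin k) = ⟨0, hk⟩ := by simp [Fin.ext_iff]; omega
    rw [e]
    exact (adj_u_p0 hk).symm
  rcases eq_or_lt_of_le (by omega : k + 1 ≤ t) with h'' | h''
  · rw [← h'', pl_u, pl_v]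
    exact adj_inl_inl huv
  rcases eq_or_lt_of_le (by omega : k + 2 ≤ t) with h3 | h3
  · rw [← h3, pl_v, pl_high (by omega) (by omega)]
    have : (⟨k + 2 + 1 - (k + 3), by omega⟩ : Fin l) = ⟨0, hl⟩ := by simp [Fin.ext_iff]
    rw [this]
    exact adj_v_q0 hl
  · rw [pl_high (by omega) (by omega), pl_high (by omega) (by omega)]
    exact adj_qq (by simp; omega)

lemma exists_walkP (huv : G.Adj u v) (hk : 1 ≤ k) (hl : 1 ≤ l) (d : ℕ) :
    ∀ a : ℕ, 1 ≤ a → a + d ≤ k + l + 2 →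
      ∃ p : (attachPaths G u v k l).Walk (pathLabel u v k l a) (pathLabel u v k l (a + d)),
        p.length = d := by
  induction d with
  | zero => exact fun a _ _ => ⟨SimpleGraph.Walk.nil, rfl⟩
  | succ d ih =>
    intro a h1 h2
    obtain ⟨p, hp⟩ := ih a h1 (by omega)
    exact ⟨p.concat (adj_P huv hk hl (by omega) (by omega)),
      by rw [SimpleGraph.Walk.length_concat, hp]⟩

lemma reachP (huv : G.Adj u v) (hk : 1 ≤ k) (hl : 1 ≤ l) {a b : ℕ} (h1 : 1 ≤ a)
    (hab : a ≤ b) (h2 : b ≤ k + l + 2) :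
    (attachPaths G u v k l).Reachable (pathLabel u v k l a) (pathLabel u v k l b) := by
  obtain ⟨p, _⟩ := exists_walkP huv hk hl (b - a) a h1 (by omega)
  have h : a + (b - a) = b := by omega
  rw [h] at p
  exact ⟨p⟩

lemma distP_le (huv : G.Adj u v) (hk : 1 ≤ k) (hl : 1 ≤ l) {a b : ℕ} (h1 : 1 ≤ a)
    (hab : a ≤ b) (h2 : b ≤ k + l + 2) :
    (attachPaths G u v k l).dist (pathLabel u v k l a) (pathLabel u v k l b) ≤ b - a := by
  obtain ⟨p, hp⟩ := exists_walkP huv hk hl (b - a) a h1 (by omega)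
  have hd := SimpleGraph.dist_le p
  have h : a + (b - a) = b := by omega
  rw [hp] at hd; rw [h] at hd
  exact hd

def inlHom (G : SimpleGraph V) (u v : V) (k l : ℕ) : G →g attachPaths G u v k l where
  toFun := Sum.inl
  map_rel' := fun h => adj_inl_inl h

lemma dist_inl_le (hG : G.Connected) (a b : V) :
    (attachPaths G u v k l).dist (Sum.inl a) (Sum.inl b) ≤ G.dist a b := by
  obtain ⟨p, hp⟩ := hG.exists_walk_length_eq_dist a b
  calc (attachPaths G u v k l).dist (Sum.inl a) (Sum.inl b)
      ≤ (p.map (inlHom G u v k l)).length := SimpleGraph.dist_le _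
    _ = G.dist a b := by rw [SimpleGraph.Walk.length_map, hp]

lemma attach_connected (hG : G.Connected) (huv : G.Adj u v) (hk : 1 ≤ k) (hl : 1 ≤ l) :
    (attachPaths G u v k l).Connected := by
  rw [SimpleGraph.connected_iff]
  have reach : ∀ z, (attachPaths G u v k l).Reachable (Sum.inl u) z := by
    intro z
    rcases z with w | j | j
    · exact (hG.preconnected u w).map (inlHom G u v k l)
    · rw [pl_inv_left j, ← @pl_u V u v k l]
      exact (reachP huv hk hl (by omega) (by omega) (by omega)).symm
    · rw [pl_inv_right j, ← @pl_u V u v k l]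
      exact reachP huv hk hl (by omega) (by omega) (by omega)
  exact ⟨fun a b => (reach a).symm.trans (reach b), ⟨Sum.inl u⟩⟩

lemma walk_lip {W : Type} {H : SimpleGraph W} (f : W → ℝ)
    (hf : ∀ a b, H.Adj a b → |f a - f b| ≤ 1) :
    ∀ {a b : W} (p : H.Walk a b), |f a - f b| ≤ p.length := by
  intro a b p
  induction p with
  | nil => simp
  | @cons a c b h p ih =>
    have := abs_sub_le (f a) (f c) (f b)
    have h1 := hf a c h
    rw [SimpleGraph.Walk.length_cons]
    push_cast
    linarith

lemma dist_lip {W : Type} {H : SimpleGraph W} (f : W → ℝ)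
    (hf : ∀ a b, H.Adj a b → |f a - f b| ≤ 1) {a b : W} (hr : H.Reachable a b) :
    |f a - f b| ≤ H.dist a b := by
  obtain ⟨p, hp⟩ := hr.exists_walk_length_eq_dist
  rw [← hp]
  exact walk_lip f hf p

section B2
open SimpleGraph
variable {V : Type} {G : SimpleGraph V} {u v : V} {k l : ℕ}

noncomputable def posU (G : SimpleGraph V) (u : V) (k l : ℕ) : (V ⊕ (Fin k ⊕ Fin l)) → ℝ
  | Sum.inl w => (k : ℝ) + 1 + G.dist u w
  | Sum.inr (Sum.inl i) => (k : ℝ) - (i : ℕ)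
  | Sum.inr (Sum.inr i) => (k : ℝ) + 3 + (i : ℕ)

noncomputable def posV (G : SimpleGraph V) (v : V) (k l : ℕ) : (V ⊕ (Fin k ⊕ Fin l)) → ℝ
  | Sum.inl w => (k : ℝ) + 2 - G.dist v w
  | Sum.inr (Sum.inl i) => (k : ℝ) - (i : ℕ)
  | Sum.inr (Sum.inr i) => (k : ℝ) + 3 + (i : ℕ)

lemma dist_adj_lip (hG : G.Connected) (w : V) {a b : V} (h : G.Adj a b) :
    |(G.dist w a : ℝ) - G.dist w b| ≤ 1 := by
  have h1 : G.dist w a ≤ G.dist w b + 1 := by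
    have := hG.dist_triangle (u := w) (v := b) (w := a)
    rwa [SimpleGraph.dist_eq_one_iff_adj.mpr h.symm] at this
  have h2 : G.dist w b ≤ G.dist w a + 1 := by
    have := hG.dist_triangle (u := w) (v := a) (w := b)
    rwa [SimpleGraph.dist_eq_one_iff_adj.mpr h] at this
  rw [abs_sub_le_iff]
  constructor <;> [skip; skip] <;>
    · have := h1; have := h2
      have c1 : (G.dist w a : ℝ) ≤ (G.dist w b : ℝ) + 1 := by exact_mod_cast h1
      have c2 : (G.dist w b : ℝ) ≤ (G.dist w a : ℝ) + 1 := by exact_mod_cast h2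
      linarith

lemma posU_lip (hG : G.Connected) (huv : G.Adj u v) :
    ∀ a b, (attachPaths G u v k l).Adj a b → |posU G u k l a - posU G u k l b| ≤ 1 := by
  have hd1 : G.dist u v = 1 := SimpleGraph.dist_eq_one_iff_adj.mpr huv
  intro a b hab
  rw [attachPaths, SimpleGraph.fromRel_adj] at hab
  obtain ⟨hne, hr⟩ := hab
  rcases a with w | i | i <;> rcases b with w' | i' | i' <;>
    simp only [posU] at * <;>
    rcases hr with h | h
  · have := dist_adj_lip hG u h
    calc |(k:ℝ) + 1 + G.dist u w - ((k:ℝ) + 1 + G.dist u w')|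
        = |(G.dist u w : ℝ) - G.dist u w'| := by ring_nf
      _ ≤ 1 := this
  · have := dist_adj_lip hG u h.symm
    calc |(k:ℝ) + 1 + G.dist u w - ((k:ℝ) + 1 + G.dist u w')|
        = |(G.dist u w : ℝ) - G.dist u w'| := by ring_nf
      _ ≤ 1 := this
  · obtain ⟨h1, h2⟩ := h; subst h1
    rw [SimpleGraph.dist_self, h2, abs_le]
    constructor <;> push_cast <;> linarith
  · exact absurd h (by simp)
  · obtain ⟨h1, h2⟩ := h; subst h1
    rw [hd1, h2, abs_le]
    constructor <;> push_cast <;> linarith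
  · exact absurd h (by simp)
  · exact absurd h (by simp)
  · obtain ⟨h1, h2⟩ := h; subst h1
    rw [SimpleGraph.dist_self, h2, abs_le]
    constructor <;> push_cast <;> linarith
  · have e : ((i' : ℕ) : ℝ) = ((i : ℕ) : ℝ) + 1 := by exact_mod_cast h
    rw [e, abs_le]; constructor <;> linarith
  · have e : ((i : ℕ) : ℝ) = ((i' : ℕ) : ℝ) + 1 := by exact_mod_cast h
    rw [e, abs_le]; constructor <;> linarith
  · exact absurd h (by simp)
  · exact absurd h (by simp)
  · exact absurd h (by simp)
  · obtain ⟨h1, h2⟩ := h; subst h1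
    rw [hd1, h2, abs_le]
    constructor <;> push_cast <;> linarith
  · exact absurd h (by simp)
  · exact absurd h (by simp)
  · have e : ((i' : ℕ) : ℝ) = ((i : ℕ) : ℝ) + 1 := by exact_mod_cast h
    rw [e, abs_le]; constructor <;> linarith
  · have e : ((i : ℕ) : ℝ) = ((i' : ℕ) : ℝ) + 1 := by exact_mod_cast h
    rw [e, abs_le]; constructor <;> linarith


lemma posV_lip (hG : G.Connected) (huv : G.Adj u v) :
    ∀ a b, (attachPaths G u v k l).Adj a b → |posV G v k l a - posV G v k l b| ≤ 1 := by
  have hd1 : G.dist v u = 1 := SimpleGraph.dist_eq_one_iff_adj.mpr huv.symm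
  intro a b hab
  rw [attachPaths, SimpleGraph.fromRel_adj] at hab
  obtain ⟨hne, hr⟩ := hab
  rcases a with w | i | i <;> rcases b with w' | i' | i' <;>
    simp only [posV] at * <;>
    rcases hr with h | h
  · have := dist_adj_lip hG v h
    calc |(k:ℝ) + 2 - G.dist v w - ((k:ℝ) + 2 - G.dist v w')|
        = |(G.dist v w' : ℝ) - G.dist v w| := by ring_nf
      _ ≤ 1 := by rw [abs_sub_comm]; exact this
  · have := dist_adj_lip hG v h.symm
    calc |(k:ℝ) + 2 - G.dist v w - ((k:ℝ) + 2 - G.dist v w')|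
        = |(G.dist v w' : ℝ) - G.dist v w| := by ring_nf
      _ ≤ 1 := by rw [abs_sub_comm]; exact this
  · obtain ⟨h1, h2⟩ := h; subst h1
    rw [hd1, h2, abs_le]
    constructor <;> push_cast <;> linarith
  · exact absurd h (by simp)
  · obtain ⟨h1, h2⟩ := h; subst h1
    rw [SimpleGraph.dist_self, h2, abs_le]
    constructor <;> push_cast <;> linarith
  · exact absurd h (by simp)
  · exact absurd h (by simp)
  · obtain ⟨h1, h2⟩ := h; subst h1
    rw [hd1, h2, abs_le]
    constructor <;> push_cast <;> linarith
  · have e : ((i' : ℕ) : ℝ) = ((i : ℕ) : ℝ) + 1 := by exact_mod_cast h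
    rw [e, abs_le]; constructor <;> linarith
  · have e : ((i : ℕ) : ℝ) = ((i' : ℕ) : ℝ) + 1 := by exact_mod_cast h
    rw [e, abs_le]; constructor <;> linarith
  · exact absurd h (by simp)
  · exact absurd h (by simp)
  · exact absurd h (by simp)
  · obtain ⟨h1, h2⟩ := h; subst h1
    rw [SimpleGraph.dist_self, h2, abs_le]
    constructor <;> push_cast <;> linarith
  · exact absurd h (by simp)
  · exact absurd h (by simp)
  · have e : ((i' : ℕ) : ℝ) = ((i : ℕ) : ℝ) + 1 := by exact_mod_cast h
    rw [e, abs_le]; constructor <;> linarith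
  · have e : ((i : ℕ) : ℝ) = ((i' : ℕ) : ℝ) + 1 := by exact_mod_cast h
    rw [e, abs_le]; constructor <;> linarith

lemma posU_P (huv : G.Adj u v) {t : ℕ} (h1 : 1 ≤ t) (h2 : t ≤ k + l + 2) :
    posU G u k l (pathLabel u v k l t) = t := by
  have hd1 : G.dist u v = 1 := SimpleGraph.dist_eq_one_iff_adj.mpr huv
  rcases le_or_gt t k with h | h
  · rw [pl_low h1 h]
    simp only [posU]
    have : ((k - t : ℕ) : ℝ) = (k : ℝ) - t := by
      push_cast [Nat.cast_sub h]; ring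
    rw [this]; ring
  rcases eq_or_lt_of_le (by omega : k + 1 ≤ t) with h' | h'
  · rw [← h', pl_u]
    simp only [posU, SimpleGraph.dist_self]
    push_cast; ring
  rcases eq_or_lt_of_le (by omega : k + 2 ≤ t) with h'' | h''
  · rw [← h'', pl_v]
    simp only [posU, hd1]
    push_cast; ring
  · rw [pl_high (by omega) h2]
    simp only [posU]
    have : ((t - (k + 3) : ℕ) : ℝ) = (t : ℝ) - k - 3 := by
      push_cast [Nat.cast_sub (by omega : k + 3 ≤ t)]; ring
    rw [this]; ring

lemma posV_P (huv : G.Adj u v) {t : ℕ} (h1 : 1 ≤ t) (h2 : t ≤ k + l + 2) :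
    posV G v k l (pathLabel u v k l t) = t := by
  have hd1 : G.dist v u = 1 := SimpleGraph.dist_eq_one_iff_adj.mpr huv.symm
  rcases le_or_gt t k with h | h
  · rw [pl_low h1 h]
    simp only [posV]
    have : ((k - t : ℕ) : ℝ) = (k : ℝ) - t := by
      push_cast [Nat.cast_sub h]; ring
    rw [this]; ring
  rcases eq_or_lt_of_le (by omega : k + 1 ≤ t) with h' | h'
  · rw [← h', pl_u]
    simp only [posV, hd1]
    push_cast; ring
  rcases eq_or_lt_of_le (by omega : k + 2 ≤ t) with h'' | h''
  · rw [← h'', pl_v]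
    simp only [posV, SimpleGraph.dist_self]
    push_cast; ring
  · rw [pl_high (by omega) h2]
    simp only [posV]
    have : ((t - (k + 3) : ℕ) : ℝ) = (t : ℝ) - k - 3 := by
      push_cast [Nat.cast_sub (by omega : k + 3 ≤ t)]; ring
    rw [this]; ring

lemma distP_eq (hG : G.Connected) (huv : G.Adj u v) (hk : 1 ≤ k) (hl : 1 ≤ l)
    {a b : ℕ} (h1 : 1 ≤ a) (hab : a ≤ b) (h2 : b ≤ k + l + 2) :
    ((attachPaths G u v k l).dist (pathLabel u v k l a) (pathLabel u v k l b) : ℝ)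
      = (b : ℝ) - a := by
  have hub := distP_le huv hk hl h1 hab h2
  have hubR : ((attachPaths G u v k l).dist (pathLabel u v k l a) (pathLabel u v k l b) : ℝ)
      ≤ (b : ℝ) - a := by
    calc ((attachPaths G u v k l).dist (pathLabel u v k l a) (pathLabel u v k l b) : ℝ)
        ≤ ((b - a : ℕ) : ℝ) := by exact_mod_cast hub
      _ = (b : ℝ) - a := by push_cast [Nat.cast_sub hab]; ring
  have hlb := dist_lip (posU G u k l) (posU_lip hG huv) (reachP huv hk hl h1 hab h2)
  rw [posU_P huv h1 (by omega), posU_P huv (by omega) h2] at hlb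
  have : (b : ℝ) - a ≤ (attachPaths G u v k l).dist (pathLabel u v k l a) (pathLabel u v k l b) := by
    have : |(a : ℝ) - b| = (b : ℝ) - a := by
      rw [abs_sub_comm, abs_of_nonneg]
      have : (a : ℝ) ≤ b := by exact_mod_cast hab
      linarith
    linarith [hlb, this ▸ hlb]
  linarith

lemma distPu_eq (hG : G.Connected) (huv : G.Adj u v) (hk : 1 ≤ k) (hl : 1 ≤ l)
    {a : ℕ} (h1 : 1 ≤ a) (h2 : a ≤ k + 1) (w : V) :
    ((attachPaths G u v k l).dist (pathLabel u v k l a) (Sum.inl w) : ℝ)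
      = (k : ℝ) + 1 - a + G.dist u w := by
  have hHconn := attach_connected hG huv hk hl
  -- upper bound
  have t1 := hHconn.dist_triangle (u := pathLabel u v k l a)
    (v := pathLabel u v k l (k + 1)) (w := Sum.inl w)
  have e1 := distP_eq hG huv hk hl h1 h2 (by omega : k + 1 ≤ k + l + 2)
  have e2 : (attachPaths G u v k l).dist (pathLabel u v k l (k + 1)) (Sum.inl w)
      ≤ G.dist u w := by rw [pl_u]; exact dist_inl_le hG u w
  have hub : ((attachPaths G u v k l).dist (pathLabel u v k l a) (Sum.inl w) : ℝ)
      ≤ (k : ℝ) + 1 - a + G.dist u w := by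
    have c1 : ((attachPaths G u v k l).dist (pathLabel u v k l a) (Sum.inl w) : ℝ)
        ≤ ((attachPaths G u v k l).dist (pathLabel u v k l a) (pathLabel u v k l (k + 1)) : ℝ)
          + ((attachPaths G u v k l).dist (pathLabel u v k l (k + 1)) (Sum.inl w) : ℝ) := by
      exact_mod_cast t1
    have c2 : ((attachPaths G u v k l).dist (pathLabel u v k l (k + 1)) (Sum.inl w) : ℝ)
        ≤ (G.dist u w : ℝ) := by exact_mod_cast e2
    rw [e1] at c1
    push_cast at c1 ⊢
    linarith
  -- lower bound
  have hlb := dist_lip (posU G u k l) (posU_lip hG huv)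
    (hHconn.preconnected (pathLabel u v k l a) (Sum.inl w))
  rw [posU_P huv h1 (by omega)] at hlb
  simp only [posU] at hlb
  have habs : (k : ℝ) + 1 + G.dist u w - a ≤ |(a : ℝ) - ((k : ℝ) + 1 + G.dist u w)| := by
    rw [abs_sub_comm]
    exact le_abs_self _
  have hia : (a : ℝ) ≤ (k : ℝ) + 1 := by exact_mod_cast h2
  linarith [hlb, habs]

lemma distPv_eq (hG : G.Connected) (huv : G.Adj u v) (hk : 1 ≤ k) (hl : 1 ≤ l)
    {a : ℕ} (h1 : k + 2 ≤ a) (h2 : a ≤ k + l + 2) (w : V) :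
    ((attachPaths G u v k l).dist (pathLabel u v k l a) (Sum.inl w) : ℝ)
      = (a : ℝ) - k - 2 + G.dist v w := by
  have hHconn := attach_connected hG huv hk hl
  have t1 := hHconn.dist_triangle (u := pathLabel u v k l a)
    (v := pathLabel u v k l (k + 2)) (w := Sum.inl w)
  have e1 : ((attachPaths G u v k l).dist (pathLabel u v k l a) (pathLabel u v k l (k + 2)) : ℝ)
      = (a : ℝ) - (k + 2) := by
    rw [SimpleGraph.dist_comm]
    have := distP_eq hG huv hk hl (by omega : 1 ≤ k + 2) h1 h2
    rw [this]; push_cast; ring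
  have e2 : (attachPaths G u v k l).dist (pathLabel u v k l (k + 2)) (Sum.inl w)
      ≤ G.dist v w := by rw [pl_v]; exact dist_inl_le hG v w
  have hub : ((attachPaths G u v k l).dist (pathLabel u v k l a) (Sum.inl w) : ℝ)
      ≤ (a : ℝ) - k - 2 + G.dist v w := by
    have c1 : ((attachPaths G u v k l).dist (pathLabel u v k l a) (Sum.inl w) : ℝ)
        ≤ ((attachPaths G u v k l).dist (pathLabel u v k l a) (pathLabel u v k l (k + 2)) : ℝ)
          + ((attachPaths G u v k l).dist (pathLabel u v k l (k + 2)) (Sum.inl w) : ℝ) := by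
      exact_mod_cast t1
    have c2 : ((attachPaths G u v k l).dist (pathLabel u v k l (k + 2)) (Sum.inl w) : ℝ)
        ≤ (G.dist v w : ℝ) := by exact_mod_cast e2
    rw [e1] at c1
    linarith
  have hlb := dist_lip (posV G v k l) (posV_lip hG huv)
    (hHconn.preconnected (pathLabel u v k l a) (Sum.inl w))
  rw [posV_P huv (by omega) h2] at hlb
  simp only [posV] at hlb
  have habs : (a : ℝ) - ((k : ℝ) + 2 - G.dist v w) ≤ |(a : ℝ) - ((k : ℝ) + 2 - G.dist v w)| :=
    le_abs_self _
  linarith [hlb, habs]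


@[simp] lemma distMatrix_apply {V : Type} [Fintype V] (G : SimpleGraph V) (a b : V) :
    distMatrix G a b = (G.dist a b : ℝ) := rfl

lemma sum_fin_k (k : ℕ) (F : ℕ → ℝ) :
    ∑ j : Fin k, F (k - (j : ℕ)) = ∑ t ∈ Finset.Icc 1 k, F t := by
  rw [Fin.sum_univ_eq_sum_range (fun j => F (k - j)) k]
  have h2 : ∑ t ∈ Finset.Icc 1 k, F t = ∑ t ∈ Finset.range k, F (1 + t) := by
    rw [← Finset.Ico_add_one_right_eq_Icc, Finset.sum_Ico_eq_sum_range]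
    simp
  rw [h2, ← Finset.sum_range_reflect]
  exact Finset.sum_congr rfl fun j hj => by
    rw [Finset.mem_range] at hj
    congr 1
    omega

lemma sum_fin_l (k l : ℕ) (F : ℕ → ℝ) :
    ∑ j : Fin l, F (k + 3 + (j : ℕ)) = ∑ t ∈ Finset.Icc (k + 3) (k + l + 2), F t := by
  rw [Fin.sum_univ_eq_sum_range (fun j => F (k + 3 + j)) l, ← Finset.Ico_add_one_right_eq_Icc,
    Finset.sum_Ico_eq_sum_range]
  have h : k + l + 2 + 1 - (k + 3) = l := by omega
  rw [h]

lemma sum_reflect_Icc (k l i : ℕ) (hi : 1 ≤ i) (hil : i ≤ l) (F : ℕ → ℝ) :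
    ∑ t ∈ Finset.Icc (l + k + 3 - i) (k + l + 2), F t
      = ∑ t ∈ Finset.Icc 1 i, F (l + k + 3 - t) := by
  rw [← Finset.Ico_add_one_right_eq_Icc, ← Finset.Ico_add_one_right_eq_Icc, Finset.sum_Ico_eq_sum_range,
    Finset.sum_Ico_eq_sum_range]
  have h1 : k + l + 2 + 1 - (l + k + 3 - i) = i := by omega
  have h2 : i + 1 - 1 = i := by omega
  rw [h1, h2, ← Finset.sum_range_reflect]
  exact Finset.sum_congr rfl fun j hj => by
    rw [Finset.mem_range] at hj
    congr 1
    omega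


lemma key_identity [Fintype V] (hG : G.Connected) (huv : G.Adj u v) (hl : 1 ≤ l)
    (hlk : l ≤ k) (x : (V ⊕ (Fin k ⊕ Fin l)) → ℝ)
    (heig : (distMatrix (attachPaths G u v k l)).mulVec x =
      distSpectralRadius (attachPaths G u v k l) • x)
    {i : ℕ} (hi1 : 1 ≤ i) (hil : i ≤ l) :
    distSpectralRadius (attachPaths G u v k l) *
      ((x (pathLabel u v k l (l + k + 3 - i)) - x (pathLabel u v k l i))
        - (x (pathLabel u v k l (l + k + 2 - i)) - x (pathLabel u v k l (i + 1))))
      = 2 * ∑ t ∈ Finset.Icc 1 i,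
          (x (pathLabel u v k l t) - x (pathLabel u v k l (l + k + 3 - t))) := by
  have hk : 1 ≤ k := le_trans hl hlk
  obtain ⟨m, hm⟩ : ∃ m, m = l + k + 3 - i := ⟨_, rfl⟩
  obtain ⟨m', hm'⟩ : ∃ q, q = l + k + 2 - i := ⟨_, rfl⟩
  rw [← hm, ← hm']
  have hmm : m = m' + 1 := by omega
  have hm1 : k + 3 ≤ m := by omega
  have hm2 : m ≤ k + l + 2 := by omega
  have hmc : (m : ℝ) = (m' : ℝ) + 1 := by exact_mod_cast hmm
  set Λ := distSpectralRadius (attachPaths G u v k l) with hΛ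
  have hrow : ∀ z, ∑ z', distMatrix (attachPaths G u v k l) z z' * x z' = Λ * x z := by
    intro z
    have h := congrFun heig z
    simpa [Matrix.mulVec, dotProduct, Pi.smul_apply, smul_eq_mul] using h
  have dPPle : ∀ {a b : ℕ}, 1 ≤ a → a ≤ b → b ≤ k + l + 2 →
      distMatrix (attachPaths G u v k l) (pathLabel u v k l a) (pathLabel u v k l b)
        = (b : ℝ) - a := by
    intro a b h1 h2 h3
    rw [distMatrix_apply]
    exact distP_eq hG huv hk hl h1 h2 h3
  have dPPge : ∀ {a b : ℕ}, 1 ≤ b → b ≤ a → a ≤ k + l + 2 →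
      distMatrix (attachPaths G u v k l) (pathLabel u v k l a) (pathLabel u v k l b)
        = (a : ℝ) - b := by
    intro a b h1 h2 h3
    rw [distMatrix_apply, SimpleGraph.dist_comm]
    exact distP_eq hG huv hk hl h1 h2 h3
  set E : (V ⊕ (Fin k ⊕ Fin l)) → ℝ := fun z =>
    distMatrix (attachPaths G u v k l) (pathLabel u v k l m) z
      - distMatrix (attachPaths G u v k l) (pathLabel u v k l i) z
      - distMatrix (attachPaths G u v k l) (pathLabel u v k l m') z
      + distMatrix (attachPaths G u v k l) (pathLabel u v k l (i + 1)) z with hE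
  have main : Λ * ((x (pathLabel u v k l m) - x (pathLabel u v k l i))
      - (x (pathLabel u v k l m') - x (pathLabel u v k l (i + 1))))
      = ∑ z, E z * x z := by
    calc Λ * ((x (pathLabel u v k l m) - x (pathLabel u v k l i))
        - (x (pathLabel u v k l m') - x (pathLabel u v k l (i + 1))))
        = Λ * x (pathLabel u v k l m) - Λ * x (pathLabel u v k l i)
          - Λ * x (pathLabel u v k l m') + Λ * x (pathLabel u v k l (i + 1)) := by ring
      _ = ∑ z, distMatrix (attachPaths G u v k l) (pathLabel u v k l m) z * x z
          - ∑ z, distMatrix (attachPaths G u v k l) (pathLabel u v k l i) z * x z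
          - ∑ z, distMatrix (attachPaths G u v k l) (pathLabel u v k l m') z * x z
          + ∑ z, distMatrix (attachPaths G u v k l) (pathLabel u v k l (i + 1)) z * x z := by
          rw [hrow, hrow, hrow, hrow]
      _ = ∑ z, E z * x z := by
          rw [← Finset.sum_sub_distrib, ← Finset.sum_sub_distrib, ← Finset.sum_add_distrib]
          exact Finset.sum_congr rfl fun z _ => by simp only [hE]; ring
  have hEV : ∀ w : V, E (Sum.inl w) = 0 := by
    intro w
    simp only [hE, distMatrix_apply]
    rw [distPv_eq hG huv hk hl (a := m) (by omega) (by omega) w,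
      distPv_eq hG huv hk hl (a := m') (by omega) (by omega) w,
      distPu_eq hG huv hk hl (a := i) hi1 (by omega) w,
      distPu_eq hG huv hk hl (a := i + 1) (by omega) (by omega) w]
    push_cast
    rw [hmc]
    ring
  have hEP1 : ∀ t : ℕ, 1 ≤ t → t ≤ k →
      E (pathLabel u v k l t) * x (pathLabel u v k l t)
        = if t ≤ i then 2 * x (pathLabel u v k l t) else 0 := by
    intro t h1 h2
    have d1 := dPPge (a := m) (b := t) h1 (by omega) hm2
    have d2 := dPPge (a := m') (b := t) h1 (by omega) (by omega)
    rcases le_or_gt t i with hti | hti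
    · have d3 := dPPge (a := i) (b := t) h1 hti (by omega)
      have d4 := dPPge (a := i + 1) (b := t) h1 (by omega) (by omega)
      rw [if_pos hti]
      simp only [hE, d1, d2, d3, d4]
      push_cast
      rw [hmc]
      ring
    · have d3 := dPPle (a := i) (b := t) hi1 (by omega) (by omega)
      have d4 := dPPle (a := i + 1) (b := t) (by omega) (by omega) (by omega)
      rw [if_neg (by omega)]
      simp only [hE, d1, d2, d3, d4]
      push_cast
      rw [hmc]
      ring
  have hEP2 : ∀ t : ℕ, k + 3 ≤ t → t ≤ k + l + 2 →
      E (pathLabel u v k l t) * x (pathLabel u v k l t)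
        = if m ≤ t then -2 * x (pathLabel u v k l t) else 0 := by
    intro t h1 h2
    have d3 := dPPle (a := i) (b := t) hi1 (by omega) h2
    have d4 := dPPle (a := i + 1) (b := t) (by omega) (by omega) h2
    rcases le_or_gt m t with hmt | hmt
    · have d1 := dPPle (a := m) (b := t) (by omega) hmt h2
      have d2 := dPPle (a := m') (b := t) (by omega) (by omega) h2
      rw [if_pos hmt]
      simp only [hE, d1, d2, d3, d4]
      push_cast
      rw [hmc]
      ring
    · have d1 := dPPge (a := m) (b := t) (by omega) (by omega) hm2
      have d2 := dPPge (a := m') (b := t) (by omega) (by omega) (by omega)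
      rw [if_neg (by omega)]
      simp only [hE, d1, d2, d3, d4]
      push_cast
      rw [hmc]
      ring
  -- split the total sum
  have split : ∑ z, E z * x z
      = (∑ w : V, E (Sum.inl w) * x (Sum.inl w))
        + ((∑ j : Fin k, E (Sum.inr (Sum.inl j)) * x (Sum.inr (Sum.inl j)))
          + (∑ j : Fin l, E (Sum.inr (Sum.inr j)) * x (Sum.inr (Sum.inr j)))) := by
    rw [Fintype.sum_sum_type (fun z => E z * x z)]
    congr 1
    exact Fintype.sum_sum_type (fun s => E (Sum.inr s) * x (Sum.inr s))
  have hS1 : (∑ w : V, E (Sum.inl w) * x (Sum.inl w)) = 0 :=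
    Finset.sum_eq_zero fun w _ => by rw [hEV w, zero_mul]
  have hS2 : (∑ j : Fin k, E (Sum.inr (Sum.inl j)) * x (Sum.inr (Sum.inl j)))
      = 2 * ∑ t ∈ Finset.Icc 1 i, x (pathLabel u v k l t) := by
    have e1 : (∑ j : Fin k, E (Sum.inr (Sum.inl j)) * x (Sum.inr (Sum.inl j)))
        = ∑ j : Fin k, (fun t => E (pathLabel u v k l t) * x (pathLabel u v k l t)) (k - (j : ℕ)) :=
      Finset.sum_congr rfl fun j _ => by rw [pl_inv_left j]
    rw [e1, sum_fin_k k (fun t => E (pathLabel u v k l t) * x (pathLabel u v k l t))]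
    have e2 : ∑ t ∈ Finset.Icc 1 k, E (pathLabel u v k l t) * x (pathLabel u v k l t)
        = ∑ t ∈ Finset.Icc 1 k, (if t ≤ i then 2 * x (pathLabel u v k l t) else 0) :=
      Finset.sum_congr rfl fun t ht => by
        rw [Finset.mem_Icc] at ht
        exact hEP1 t ht.1 ht.2
    rw [e2]
    have e3 : ∑ t ∈ Finset.Icc 1 k, (if t ≤ i then 2 * x (pathLabel u v k l t) else 0)
        = ∑ t ∈ Finset.Icc 1 i, (if t ≤ i then 2 * x (pathLabel u v k l t) else 0) := by
      refine (Finset.sum_subset (Finset.Icc_subset_Icc_right (by omega)) ?_).symm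
      intro t ht hts
      rw [Finset.mem_Icc] at ht hts
      rw [if_neg (by omega)]
    rw [e3, Finset.mul_sum]
    exact Finset.sum_congr rfl fun t ht => by
      rw [Finset.mem_Icc] at ht
      rw [if_pos ht.2]
  have hS3 : (∑ j : Fin l, E (Sum.inr (Sum.inr j)) * x (Sum.inr (Sum.inr j)))
      = -2 * ∑ t ∈ Finset.Icc 1 i, x (pathLabel u v k l (l + k + 3 - t)) := by
    have e1 : (∑ j : Fin l, E (Sum.inr (Sum.inr j)) * x (Sum.inr (Sum.inr j)))
        = ∑ j : Fin l,
            (fun t => E (pathLabel u v k l t) * x (pathLabel u v k l t)) (k + 3 + (j : ℕ)) :=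
      Finset.sum_congr rfl fun j _ => by rw [pl_inv_right j]
    rw [e1, sum_fin_l k l (fun t => E (pathLabel u v k l t) * x (pathLabel u v k l t))]
    have e2 : ∑ t ∈ Finset.Icc (k + 3) (k + l + 2),
          E (pathLabel u v k l t) * x (pathLabel u v k l t)
        = ∑ t ∈ Finset.Icc (k + 3) (k + l + 2),
            (if m ≤ t then -2 * x (pathLabel u v k l t) else 0) :=
      Finset.sum_congr rfl fun t ht => by
        rw [Finset.mem_Icc] at ht
        exact hEP2 t ht.1 ht.2
    rw [e2]
    have e3 : ∑ t ∈ Finset.Icc (k + 3) (k + l + 2),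
          (if m ≤ t then -2 * x (pathLabel u v k l t) else 0)
        = ∑ t ∈ Finset.Icc m (k + l + 2), (if m ≤ t then -2 * x (pathLabel u v k l t) else 0) := by
      refine (Finset.sum_subset (Finset.Icc_subset_Icc_left (by omega)) ?_).symm
      intro t ht hts
      rw [Finset.mem_Icc] at ht hts
      rw [if_neg (by omega)]
    rw [e3]
    have e4 : ∑ t ∈ Finset.Icc m (k + l + 2), (if m ≤ t then -2 * x (pathLabel u v k l t) else 0)
        = ∑ t ∈ Finset.Icc m (k + l + 2), -2 * x (pathLabel u v k l t) :=
      Finset.sum_congr rfl fun t ht => by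
        rw [Finset.mem_Icc] at ht
        rw [if_pos ht.1]
    rw [e4, ← Finset.mul_sum]
    have e5 := sum_reflect_Icc k l i hi1 hil (fun t => x (pathLabel u v k l t))
    rw [← hm] at e5
    rw [e5]
  rw [main, split, hS1, hS2, hS3, zero_add, Finset.mul_sum, Finset.mul_sum, Finset.mul_sum,
    ← Finset.sum_add_distrib]
  exact Finset.sum_congr rfl fun t _ => by ring


end B2

end Aux

/-- Let `G` be connected with adjacent vertices `u, v`, let
`k ≥ l ≥ 1`, and let `x` be a positive eigenvector of the distance matrix of
`G_{k,l}` for `Λ₁(G_{k,l})`.  With the paper's labelling `1, …, k+1 = u, k+2 = v,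
…, k+l+2` of the two pendant paths, the differences `x_{l+k+3-i} - x_i` for
`1 ≤ i ≤ l+1` are either all non-positive or all non-negative. -/
theorem pathDifferences_same_sign {V : Type} [Fintype V] (G : SimpleGraph V)
    (hG : G.Connected) (u v : V) (huv : G.Adj u v) (k l : ℕ) (hl : 1 ≤ l) (hlk : l ≤ k)
    (x : (V ⊕ (Fin k ⊕ Fin l)) → ℝ) (hx : ∀ w, 0 < x w)
    (heig : (distMatrix (attachPaths G u v k l)).mulVec x =
      distSpectralRadius (attachPaths G u v k l) • x) :
    (∀ i : ℕ, 1 ≤ i → i ≤ l + 1 →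
        x (pathLabel u v k l (l + k + 3 - i)) - x (pathLabel u v k l i) ≤ 0) ∨
      (∀ i : ℕ, 1 ≤ i → i ≤ l + 1 →
        0 ≤ x (pathLabel u v k l (l + k + 3 - i)) - x (pathLabel u v k l i)) := by
  have hk : 1 ≤ k := le_trans hl hlk
  set Λ := distSpectralRadius (attachPaths G u v k l) with hΛ
  have hrow : ∀ z, ∑ z', distMatrix (attachPaths G u v k l) z z' * x z' = Λ * x z := by
    intro z
    have h := congrFun heig z
    simpa [Matrix.mulVec, dotProduct, Pi.smul_apply, smul_eq_mul] using h
  have hΛpos : 0 < Λ := by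
    have h1 := hrow (pathLabel u v k l 1)
    have hterm : distMatrix (attachPaths G u v k l) (pathLabel u v k l 1)
          (pathLabel u v k l (k + l + 2)) * x (pathLabel u v k l (k + l + 2))
        ≤ ∑ z', distMatrix (attachPaths G u v k l) (pathLabel u v k l 1) z' * x z' :=
      Finset.single_le_sum
        (fun z _ => mul_nonneg (by rw [distMatrix_apply]; positivity) (hx z).le)
        (Finset.mem_univ _)
    have hdist : distMatrix (attachPaths G u v k l) (pathLabel u v k l 1)
        (pathLabel u v k l (k + l + 2)) = ((k + l + 2 : ℕ) : ℝ) - 1 := by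
      rw [distMatrix_apply]
      exact_mod_cast distP_eq hG huv hk hl (by omega) (by omega) (by omega)
    have hc : (1 : ℝ) ≤ ((k + l + 2 : ℕ) : ℝ) - 1 := by
      have : (2 : ℕ) ≤ k + l + 2 := by omega
      have : (2 : ℝ) ≤ ((k + l + 2 : ℕ) : ℝ) := by exact_mod_cast this
      linarith
    have hpos : 0 < Λ * x (pathLabel u v k l 1) := by
      rw [← h1]
      refine lt_of_lt_of_le ?_ hterm
      rw [hdist]
      have := hx (pathLabel u v k l (k + l + 2))
      nlinarith
    nlinarith [hx (pathLabel u v k l 1)]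
  set d : ℕ → ℝ := fun j => x (pathLabel u v k l (l + k + 3 - j)) - x (pathLabel u v k l j)
    with hd
  have hrec : ∀ j, 1 ≤ j → j ≤ l →
      Λ * d (j + 1) = Λ * d j + 2 * ∑ t ∈ Finset.Icc 1 j, d t := by
    intro j h1 h2
    have hk2 := key_identity hG huv hl hlk x heig h1 h2
    have e : l + k + 3 - (j + 1) = l + k + 2 - j := by omega
    have lhs_eq : (x (pathLabel u v k l (l + k + 3 - j)) - x (pathLabel u v k l j))
        - (x (pathLabel u v k l (l + k + 2 - j)) - x (pathLabel u v k l (j + 1)))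
        = d j - d (j + 1) := by
      simp only [hd, e]
    have rhs_eq : ∑ t ∈ Finset.Icc 1 j,
          (x (pathLabel u v k l t) - x (pathLabel u v k l (l + k + 3 - t)))
        = -∑ t ∈ Finset.Icc 1 j, d t := by
      rw [← Finset.sum_neg_distrib]
      exact Finset.sum_congr rfl fun t _ => by simp only [hd]; ring
    rw [lhs_eq, rhs_eq] at hk2
    have : Λ * (d j - d (j + 1)) = -(2 * ∑ t ∈ Finset.Icc 1 j, d t) := by
      rw [hk2]; ring
    linarith [this]
  rcases le_total 0 (d 1) with h0 | h0
  · right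
    have claim : ∀ j, 1 ≤ j → j ≤ l + 1 → 0 ≤ d j ∧ 0 ≤ ∑ t ∈ Finset.Icc 1 j, d t := by
      intro j
      induction j with
      | zero => intro h; omega
      | succ n ih =>
        intro h1 h2
        rcases Nat.eq_zero_or_pos n with hn | hn
        · subst hn
          refine ⟨h0, ?_⟩
          rw [show Finset.Icc 1 1 = {1} from Finset.Icc_self 1, Finset.sum_singleton]
          exact h0
        · obtain ⟨hdn, hSn⟩ := ih (by omega) (by omega)
          have hrecn := hrec n (by omega) (by omega)
          have hd1 : 0 ≤ d (n + 1) := by nlinarith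
          refine ⟨hd1, ?_⟩
          rw [Finset.sum_Icc_succ_top (by omega : 1 ≤ n + 1)]
          linarith
    intro i h1 h2
    exact (claim i h1 h2).1
  · left
    have claim : ∀ j, 1 ≤ j → j ≤ l + 1 → d j ≤ 0 ∧ (∑ t ∈ Finset.Icc 1 j, d t) ≤ 0 := by
      intro j
      induction j with
      | zero => intro h; omega
      | succ n ih =>
        intro h1 h2
        rcases Nat.eq_zero_or_pos n with hn | hn
        · subst hn
          refine ⟨h0, ?_⟩
          rw [show Finset.Icc 1 1 = {1} from Finset.Icc_self 1, Finset.sum_singleton]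
          exact h0
        · obtain ⟨hdn, hSn⟩ := ih (by omega) (by omega)
          have hrecn := hrec n (by omega) (by omega)
          have hd1 : d (n + 1) ≤ 0 := by nlinarith
          refine ⟨hd1, ?_⟩
          rw [Finset.sum_Icc_succ_top (by omega : 1 ≤ n + 1)]
          linarith
    intro i h1 h2
    exact (claim i h1 h2).1
end
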